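/- Let A be a core redex-algebra and A/≈ its minimization via the iterated refinement of the initial indistinguishability equivalence. Then the quotient operations are well-defined and A/≈ is a core redex-algebra equivalent to A, i.e., L(A/≈) = L(A). -/

import Mathlib

/-!
Each refinement `≈ₙ` is an equivalence (induction on `n`), hence so is their intersection `≈`.
As `a ≈ b` gives `a ≈ₙ₊₁ b` for every `n`, each `[f]` preserves `≈` in each argument, and
`≈ ⊆ ≈₀` makes each `is_red_f` constant on `≈`-classes in each argument; changing the arguments
one at a time, both hold in all arguments at once. So the operations of `A/≈` are well defined on
representatives and the projection `A → A/≈` is a homomorphism. It therefore commutes with the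
evaluation of ground terms, which makes `A/≈` core and gives `L(A/≈) = L(A)`.
-/

namespace TRSStmt

/-- First-order terms over a signature `F` with arity function `ar` and variables `V`. -/
inductive Tm (F : Type) (ar : F → ℕ) (V : Type) : Type
  | var : V → Tm F ar V
  | app : (f : F) → (Fin (ar f) → Tm F ar V) → Tm F ar V

variable {F : Type} {ar : F → ℕ} {V W A : Type}

/-- Interpretation of a term in a `Σ`-algebra, given an assignment. -/
def Tm.eval (I : (f : F) → (Fin (ar f) → A) → A) (α : V → A) : Tm F ar V → A
  | .var x => α x
  | .app f ts => I f (fun i => (ts i).eval I α)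

/-- Homomorphic extension of a substitution. -/
def Tm.subst (σ : V → Tm F ar W) : Tm F ar V → Tm F ar W
  | .var x => σ x
  | .app f ts => .app f (fun i => (ts i).subst σ)

/-- A variable occurs in a term. -/
def Tm.occurs (x : V) : Tm F ar V → Prop
  | .var y => y = x
  | .app _ ts => ∃ i, (ts i).occurs x

/-- Subterm at a position (0-indexed). -/
def Tm.subAt : Tm F ar V → List ℕ → Option (Tm F ar V)
  | t, [] => some t
  | .var _, _ :: _ => none
  | .app f ts, i :: p => if h : i < ar f then (ts ⟨i, h⟩).subAt p else none

/-- Replace the subterm at a position. -/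
def Tm.replaceAt : Tm F ar V → List ℕ → Tm F ar V → Option (Tm F ar V)
  | _, [], s => some s
  | .var _, _ :: _, _ => none
  | .app f ts, i :: p, s =>
      if h : i < ar f then
        ((ts ⟨i, h⟩).replaceAt p s).map (fun u => .app f (Function.update ts ⟨i, h⟩ u))
      else none

/-- The root symbol of a term (if any). -/
def Tm.rootSym : Tm F ar V → Option F
  | .var _ => none
  | .app f _ => some f

/-- The function symbol at a position. -/
def Tm.symAt (t : Tm F ar V) (p : List ℕ) : Option F := (t.subAt p).bind Tm.rootSym

/-- A rewrite rule is a pair of terms. -/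
abbrev Rule (F : Type) (ar : F → ℕ) (V : Type) := Tm F ar V × Tm F ar V

/-- A set of rules is a TRS: left-hand sides are no variables and
    right-hand side variables occur on the left. -/
def IsTRS (R : Set (Rule F ar V)) : Prop :=
  ∀ lr ∈ R, (∀ x : V, lr.1 ≠ Tm.var x) ∧ ∀ x : V, lr.2.occurs x → lr.1.occurs x

/-- `t` is a redex with respect to `R`. -/
def IsRedex (R : Set (Rule F ar V)) (t : Tm F ar W) : Prop :=
  ∃ lr ∈ R, ∃ σ : V → Tm F ar W, t = lr.1.subst σ

/-- Rewrite step at position `p`. -/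
def RewAt (R : Set (Rule F ar V)) (p : List ℕ) (t u : Tm F ar W) : Prop :=
  ∃ lr ∈ R, ∃ σ : V → Tm F ar W,
    t.subAt p = some (lr.1.subst σ) ∧ t.replaceAt p (lr.2.subst σ) = some u

/-- Outermost rewrite step at position `p`: no redex strictly above `p`. -/
def OutAt (R : Set (Rule F ar V)) (p : List ℕ) (t u : Tm F ar W) : Prop :=
  RewAt R p t u ∧
    ∀ q, q <+: p → q ≠ p → ∀ s, t.subAt q = some s → ¬ IsRedex R s

/-- Outermost rewrite step. -/
def OStep (R : Set (Rule F ar V)) (t u : Tm F ar W) : Prop := ∃ p, OutAt R p t u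

/-- μ-replacing positions for a replacement map `μ`. -/
inductive MuPos (μ : (f : F) → Fin (ar f) → Prop) : Tm F ar V → List ℕ → Prop
  | nil (t : Tm F ar V) : MuPos μ t []
  | cons (f : F) (ts : Fin (ar f) → Tm F ar V) (i : Fin (ar f)) (p : List ℕ) :
      μ f i → MuPos μ (ts i) p → MuPos μ (Tm.app f ts) (i.val :: p)

/-- Context-sensitive (μ-)rewrite step. -/
def MuStep (R : Set (Rule F ar V)) (μ : (f : F) → Fin (ar f) → Prop)
    (t u : Tm F ar W) : Prop :=
  ∃ p, RewAt R p t u ∧ MuPos μ t p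

/-- No infinite sequence for a relation (termination / strong normalization). -/
def NoInf {τ : Type _} (r : τ → τ → Prop) : Prop :=
  ¬ ∃ g : ℕ → τ, ∀ n, r (g n) (g (n + 1))

/-- One-hole contexts. -/
inductive Ctx (F : Type) (ar : F → ℕ) (V : Type) : Type
  | hole : Ctx F ar V
  | app : (f : F) → (i : Fin (ar f)) → ((j : Fin (ar f)) → j ≠ i → Tm F ar V) →
      Ctx F ar V → Ctx F ar V

/-- Depth of the hole of a context. -/
def Ctx.depth : Ctx F ar V → ℕ
  | .hole => 0
  | .app _ _ _ C => C.depth + 1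

/-- Filling the hole of a context with a term. -/
def Ctx.fill : Ctx F ar V → Tm F ar V → Tm F ar V
  | .hole, s => s
  | .app f i ts C, s => .app f (fun j => if h : j = i then C.fill s else ts j h)

/-- The rule `lr` preserves the interpretation inside every context of depth `n`. -/
def HoldsAtDepth (I : (f : F) → (Fin (ar f) → A) → A) (n : ℕ) (lr : Rule F ar V) : Prop :=
  ∀ (C : Ctx F ar V) (α : V → A), C.depth = n →
    (C.fill lr.1).eval I α = (C.fill lr.2).eval I α

/-- `A` is a C-model for `R`. -/
def IsCModel (I : (f : F) → (Fin (ar f) → A) → A) (R : Set (Rule F ar V)) : Prop :=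
  ∀ lr ∈ R, ∃ n, HoldsAtDepth I n lr

/-- `A` is a model for `R`. -/
def IsModel (I : (f : F) → (Fin (ar f) → A) → A) (R : Set (Rule F ar V)) : Prop :=
  ∀ lr ∈ R, ∀ α : V → A, lr.1.eval I α = lr.2.eval I α

section Label
variable {L : F → Type}

/-- Labeled signature: symbols with a label. -/
abbrev LSym (F : Type) (L : F → Type) := Σ f : F, L f

/-- Arity on the labeled signature. -/
abbrev lar (ar : F → ℕ) : LSym F L → ℕ := fun g => ar g.1

/-- Semantic labeling of a term with respect to an assignment. -/
def labT (I : (f : F) → (Fin (ar f) → A) → A)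
    (lf : ∀ f : F, (Fin (ar f) → A) → L f) (α : V → A) :
    Tm F ar V → Tm (LSym F L) (lar ar) V
  | .var x => .var x
  | .app f ts => .app ⟨f, lf f (fun i => (ts i).eval I α)⟩ (fun i => labT I lf α (ts i))

end Label

/-- Evaluation of ground terms. -/
def geval (I : (f : F) → (Fin (ar f) → A) → A) : Tm F ar Empty → A :=
  Tm.eval I (fun x => x.elim)

/-- Labeling of ground terms. -/
def glab {L : F → Type} (I : (f : F) → (Fin (ar f) → A) → A)
    (lf : ∀ f : F, (Fin (ar f) → A) → L f) :
    Tm F ar Empty → Tm (LSym F L) (lar ar) Empty :=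
  labT I lf (fun x => x.elim)

/-- Terms not containing the symbol `tp`. -/
def tpFree (tp : F) : Tm F ar V → Prop
  | .var _ => True
  | .app f ts => f ≠ tp ∧ ∀ i, tpFree tp (ts i)

/-- The term `top(s)`. -/
def topT (tp : F) (s : Tm F ar V) : Tm F ar V := Tm.app tp (fun _ => s)

/-- Number of occurrences of a variable in a term. -/
def countV [DecidableEq V] (x : V) : Tm F ar V → ℕ
  | .var y => if y = x then 1 else 0
  | .app _ ts => ∑ i, countV x (ts i)

/-- Linear terms: every variable occurs at most once. -/
def Linear [DecidableEq V] (t : Tm F ar V) : Prop := ∀ x : V, countV x t ≤ 1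

/-- Quasi-left-linear TRS. -/
def QuasiLeftLinear [DecidableEq V] (R : Set (Rule F ar V)) : Prop :=
  ∀ lr ∈ R, ¬ Linear lr.1 →
    ∃ lr' ∈ R, Linear lr'.1 ∧ ∃ σ : V → Tm F ar V, lr.1 = lr'.1.subst σ

end TRSStmt

namespace Stmt

open TRSStmt

/-- The iterated refinement `≈_i` of the initial indistinguishability equivalence
    on a redex-algebra. -/
def eqv {F : Type} {ar : F → ℕ} {A : Type}
    (interp : (f : F) → (Fin (ar f) → A) → A)
    (isRed : (f : F) → (Fin (ar f) → A) → Bool) : ℕ → A → A → Prop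
  | 0 => fun a b => ∀ (f : F) (as : Fin (ar f) → A) (i : Fin (ar f)),
      isRed f (Function.update as i a) = isRed f (Function.update as i b)
  | n + 1 => fun a b => eqv interp isRed n a b ∧
      ∀ (f : F) (as : Fin (ar f) → A) (i : Fin (ar f)),
        eqv interp isRed n (interp f (Function.update as i a))
          (interp f (Function.update as i b))

/-- The limit `≈` of the refinement chain. -/
def Eqv {F : Type} {ar : F → ℕ} {A : Type}
    (interp : (f : F) → (Fin (ar f) → A) → A)
    (isRed : (f : F) → (Fin (ar f) → A) → Bool) (a b : A) : Prop :=
  ∀ n, eqv interp isRed n a b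

theorem rel_apply_of_forall_rel_update {ι α β : Type*} [Fintype ι] [DecidableEq ι]
    {r : α → α → Prop} {s : β → β → Prop} [Std.Refl s] [IsTrans β s] {g : (ι → α) → β}
    (hg : ∀ (as : ι → α) (i : ι) {a b : α}, r a b →
      s (g (Function.update as i a)) (g (Function.update as i b)))
    {as bs : ι → α} (h : ∀ i, r (as i) (bs i)) : s (g as) (g bs) := by
  suffices ∀ S : Finset ι, s (g as) (g (S.piecewise bs as)) by
    simpa using this Finset.univ
  intro S
  induction S using Finset.induction_on with
  | empty => simpa using refl_of s (g as)
  | insert j S hj ih =>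
    have step := hg (S.piecewise bs as) j (h j)
    rw [← Finset.piecewise_eq_of_notMem S bs as hj, Function.update_eq_self] at step
    rw [Finset.piecewise_insert]
    exact _root_.trans ih step

section Quotient

variable {F : Type} {ar : F → ℕ} {A : Type}
    (interp : (f : F) → (Fin (ar f) → A) → A)
    (isRed : (f : F) → (Fin (ar f) → A) → Bool)

theorem eqv_equivalence : ∀ n, Equivalence (eqv interp isRed n)
  | 0 =>
    ⟨fun _ _ _ _ => rfl,
     fun h f as i => (h f as i).symm,
     fun h₁ h₂ f as i => (h₁ f as i).trans (h₂ f as i)⟩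
  | n + 1 =>
    have ih := eqv_equivalence n
    ⟨fun a => ⟨ih.refl a, fun _ _ _ => ih.refl _⟩,
     fun h => ⟨ih.symm h.1, fun f as i => ih.symm (h.2 f as i)⟩,
     fun h₁ h₂ => ⟨ih.trans h₁.1 h₂.1, fun f as i => ih.trans (h₁.2 f as i) (h₂.2 f as i)⟩⟩

theorem Eqv.equivalence : Equivalence (Eqv interp isRed) :=
  ⟨fun a n => (eqv_equivalence interp isRed n).refl a,
   fun h n => (eqv_equivalence interp isRed n).symm (h n),
   fun h₁ h₂ n => (eqv_equivalence interp isRed n).trans (h₁ n) (h₂ n)⟩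

variable {interp isRed}

theorem Eqv.interp_congr {f : F} {as bs : Fin (ar f) → A}
    (h : ∀ i, Eqv interp isRed (as i) (bs i)) :
    Eqv interp isRed (interp f as) (interp f bs) :=
  have := (Eqv.equivalence interp isRed).stdRefl
  have := (Eqv.equivalence interp isRed).isTrans
  rel_apply_of_forall_rel_update (fun as i _ _ hab n => (hab (n + 1)).2 f as i) h

theorem Eqv.isRed_congr {f : F} {as bs : Fin (ar f) → A}
    (h : ∀ i, Eqv interp isRed (as i) (bs i)) : isRed f as = isRed f bs :=
  rel_apply_of_forall_rel_update (fun as i _ _ hab => hab 0 f as i) h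

theorem Eqv.mk_out (a : A) : Eqv interp isRed (Quot.mk (Eqv interp isRed) a).out a :=
  (Eqv.equivalence interp isRed).eqvGen_iff.mp (Quot.eqvGen_exact (Quot.out_eq _))

variable (interp isRed)

noncomputable def quotInterp (f : F) (qs : Fin (ar f) → Quot (Eqv interp isRed)) :
    Quot (Eqv interp isRed) :=
  Quot.mk _ (interp f fun i => (qs i).out)

noncomputable def quotIsRed (f : F) (qs : Fin (ar f) → Quot (Eqv interp isRed)) : Bool :=
  isRed f fun i => (qs i).out

theorem quotInterp_mk (f : F) (as : Fin (ar f) → A) :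
    quotInterp interp isRed f (fun i => Quot.mk _ (as i)) = Quot.mk _ (interp f as) :=
  Quot.sound (Eqv.interp_congr fun i => Eqv.mk_out (as i))

theorem quotIsRed_mk (f : F) (as : Fin (ar f) → A) :
    quotIsRed interp isRed f (fun i => Quot.mk _ (as i)) = isRed f as :=
  Eqv.isRed_congr fun i => Eqv.mk_out (as i)

theorem geval_quotInterp (t : Tm F ar Empty) :
    geval (quotInterp interp isRed) t = Quot.mk _ (geval interp t) := by
  induction t with
  | var x => exact x.elim
  | app f ts ih =>
    change quotInterp interp isRed f (fun i => geval _ (ts i)) = _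
    simp only [ih]
    exact quotInterp_mk interp isRed f _

end Quotient

theorem minimization_general {F : Type} {ar : F → ℕ} {A : Type}
    (interp : (f : F) → (Fin (ar f) → A) → A)
    (isRed : (f : F) → (Fin (ar f) → A) → Bool)
    (hcore : ∀ a : A, ∃ t : Tm F ar Empty, geval interp t = a) :
    Equivalence (Eqv interp isRed) ∧
    ∃ (interpQ : (f : F) → (Fin (ar f) → Quot (Eqv interp isRed)) →
        Quot (Eqv interp isRed))
      (isRedQ : (f : F) → (Fin (ar f) → Quot (Eqv interp isRed)) → Bool),
      (∀ (f : F) (as : Fin (ar f) → A),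
        interpQ f (fun i => Quot.mk _ (as i)) = Quot.mk _ (interp f as)) ∧
      (∀ (f : F) (as : Fin (ar f) → A),
        isRedQ f (fun i => Quot.mk _ (as i)) = isRed f as) ∧
      (∀ q : Quot (Eqv interp isRed), ∃ t : Tm F ar Empty, geval interpQ t = q) ∧
      (∀ (f : F) (ts : Fin (ar f) → Tm F ar Empty),
        isRedQ f (fun i => geval interpQ (ts i)) =
          isRed f (fun i => geval interp (ts i))) := by
  refine ⟨Eqv.equivalence interp isRed, quotInterp interp isRed, quotIsRed interp isRed,
    quotInterp_mk interp isRed, quotIsRed_mk interp isRed, ?core, ?language⟩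
  case core =>
    rintro ⟨a⟩
    obtain ⟨t, rfl⟩ := hcore a
    exact ⟨t, geval_quotInterp interp isRed t⟩
  case language =>
    intro f ts
    simp only [geval_quotInterp]
    exact quotIsRed_mk interp isRed f _

/-- for a (finite) core redex-algebra `A`, the relation `≈` is an
    equivalence, the quotient operations are well-defined (the interpretation and
    `is_red` lift to `A/≈`), the quotient is again a core redex-algebra, and it is
    equivalent to `A`: `L(A/≈) = L(A)`. -/
theorem minimization {F : Type} {ar : F → ℕ} {A : Type} [Finite A]
    (interp : (f : F) → (Fin (ar f) → A) → A)
    (isRed : (f : F) → (Fin (ar f) → A) → Bool)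
    (hcore : ∀ a : A, ∃ t : Tm F ar Empty, geval interp t = a) :
    Equivalence (Eqv interp isRed) ∧
    ∃ (interpQ : (f : F) → (Fin (ar f) → Quot (Eqv interp isRed)) →
        Quot (Eqv interp isRed))
      (isRedQ : (f : F) → (Fin (ar f) → Quot (Eqv interp isRed)) → Bool),
      (∀ (f : F) (as : Fin (ar f) → A),
        interpQ f (fun i => Quot.mk _ (as i)) = Quot.mk _ (interp f as)) ∧
      (∀ (f : F) (as : Fin (ar f) → A),
        isRedQ f (fun i => Quot.mk _ (as i)) = isRed f as) ∧
      (∀ q : Quot (Eqv interp isRed), ∃ t : Tm F ar Empty, geval interpQ t = q) ∧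
      (∀ (f : F) (ts : Fin (ar f) → Tm F ar Empty),
        isRedQ f (fun i => geval interpQ (ts i)) =
          isRed f (fun i => geval interp (ts i))) :=
  minimization_general interp isRed hcore

end Stmt
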